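/- arXiv:cs/0306107 — 5 statements merged into one kernel-verified Lean document; each statement's English description precedes it below -/
import Mathlib

section
/- In a chain of bundles B_0 ↦ B_1 ↦ B_2 ↦ ..., where B_0 is the empty bundle and each step extends, per agent, at most one strand by at most one node, the height of B_n (the length of the longest causal path of → and ⇒ edges in B_n) is at most 2n. -/
namespace StrandPaper

/-- A strand space over a message set `M`: a type of strands, each with a trace,
a finite sequence of signed terms.  A signed term `(true, u)` is `+u` (send) and
`(false, u)` is `-u` (receive). -/
structure StrandSpace (M : Type) where
  Strand : Type
  tr : Strand → List (Bool × M)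

namespace StrandSpace

variable {M α : Type}

/-- Nodes are pairs of a strand and a (1-based) index. -/
abbrev Node (S : StrandSpace M) : Type := S.Strand × ℕ

/-- The signed term at a node (if the index is valid). -/
def term (S : StrandSpace M) (n : S.Node) : Option (Bool × M) := (S.tr n.1)[n.2 - 1]?

def IsNode (S : StrandSpace M) (n : S.Node) : Prop := 1 ≤ n.2 ∧ n.2 ≤ (S.tr n.1).length

/-- `n1 → n2`: `term n1 = +u` and `term n2 = -u`. -/
def SendsTo (S : StrandSpace M) (n1 n2 : S.Node) : Prop :=
  ∃ u, S.term n1 = some (true, u) ∧ S.term n2 = some (false, u)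

/-- `n1 ⇒ n2`: consecutive nodes of the same strand. -/
def SuccEdge (S : StrandSpace M) (n1 n2 : S.Node) : Prop :=
  n2.1 = n1.1 ∧ n2.2 = n1.2 + 1 ∧ S.IsNode n1 ∧ S.IsNode n2

/-- A (possibly infinite) bundle: a subgraph of `(N, → ∪ ⇒)` satisfying B2–B4:
every negative node has a unique incoming `→` edge, `⇒`-downward closure and
acyclicity. -/
structure Bundle (S : StrandSpace M) where
  nodes : Set S.Node
  comm : S.Node → S.Node → Prop
  nodes_valid : ∀ n ∈ nodes, S.IsNode n
  comm_mem : ∀ n1 n2, comm n1 n2 → n1 ∈ nodes ∧ n2 ∈ nodes ∧ S.SendsTo n1 n2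
  recv_unique : ∀ n2 ∈ nodes, ∀ u, S.term n2 = some (false, u) → ∃! n1, comm n1 n2
  succ_closed : ∀ n1 n2, S.SuccEdge n1 n2 → n2 ∈ nodes → n1 ∈ nodes
  acyclic : ∀ n, ¬ Relation.TransGen
      (fun m1 m2 => comm m1 m2 ∨ (S.SuccEdge m1 m2 ∧ m1 ∈ nodes ∧ m2 ∈ nodes)) n n

variable {S : StrandSpace M}

/-- The causal edges (`→` or `⇒`) of a bundle. -/
def Bundle.edge (B : S.Bundle) (n1 n2 : S.Node) : Prop :=
  B.comm n1 n2 ∨ (S.SuccEdge n1 n2 ∧ n1 ∈ B.nodes ∧ n2 ∈ B.nodes)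

/-- A causal path in a bundle. -/
def Bundle.CausalPath (B : S.Bundle) (l : List S.Node) : Prop :=
  l.Chain' B.edge ∧ ∀ n ∈ l, n ∈ B.nodes

/-- The height of the bundle is at most `k`: every causal path has at most `k+1` nodes
(i.e. length at most `k`). -/
def Bundle.HeightLE (B : S.Bundle) (k : ℕ) : Prop :=
  ∀ l, B.CausalPath l → l.length ≤ k + 1

def Bundle.FiniteHeight (B : S.Bundle) : Prop := ∃ k, B.HeightLE k

noncomputable def Bundle.height (B : S.Bundle) : ℕ := sInf {k | B.HeightLE k}

/-- The height of a strand in a bundle: the largest `i` with `⟨s,i⟩ ∈ B` (0 if none). -/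
noncomputable def Bundle.strandHeight (B : S.Bundle) (s : S.Strand) : ℕ :=
  sSup {i | (s, i) ∈ B.nodes}

/-- The empty bundle. -/
def emptyBundle (S : StrandSpace M) : S.Bundle where
  nodes := ∅
  comm := fun _ _ => False
  nodes_valid := fun n hn => absurd hn (Set.notMem_empty n)
  comm_mem := fun _ _ h => h.elim
  recv_unique := fun n hn => absurd hn (Set.notMem_empty n)
  succ_closed := fun _ n2 _ h => absurd h (Set.notMem_empty n2)
  acyclic := by
    intro n h
    cases h with
    | single h1 => rcases h1 with h1 | ⟨_, h3, _⟩
                   · exact h1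
                   · exact h3
    | tail _ h1 => rcases h1 with h1 | ⟨_, h3, _⟩
                   · exact h1
                   · exact h3

/-- `B1 ⊑_f B2`: `f` maps each strand prefix in `B1` into `B2`, preserving terms
and `→` edges. -/
def Embeds (f : S.Strand ≃ S.Strand) (B1 B2 : S.Bundle) : Prop :=
  (∀ s i, (s, i) ∈ B1.nodes → (f s, i) ∈ B2.nodes ∧ S.term (s, i) = S.term (f s, i)) ∧
  (∀ s i s' j, B1.comm (s, i) (s', j) → B2.comm (f s, i) (f s', j))

/-- `B1 ↦ B2` via the agent-respecting bijection `f`: `B1 ⊑_f B2` and, for each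
agent, at most one of its strands is extended, by at most (exactly) one node. -/
def StepVia (A : S.Strand → α) (f : S.Strand ≃ S.Strand) (B1 B2 : S.Bundle) : Prop :=
  (∀ s, A (f s) = A s) ∧ Embeds f B1 B2 ∧
  ∀ s s', A s = A s' →
    B2.strandHeight (f s) ≠ B1.strandHeight s →
    B2.strandHeight (f s') ≠ B1.strandHeight s' →
    s = s' ∧ B2.strandHeight (f s) = B1.strandHeight s + 1

/-- `B1 ↦ B2`. -/
def Step (A : S.Strand → α) (B1 B2 : S.Bundle) : Prop := ∃ f, StepVia A f B1 B2

/-- A chain `B_0 ↦ B_1 ↦ ⋯` starting from the empty bundle. -/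
structure Chain (A : S.Strand → α) where
  B : ℕ → S.Bundle
  init : B 0 = emptyBundle S
  step : ∀ k, Step A (B k) (B (k + 1))

/-- The event (if any) performed by agent `a` in the step `B1 ↦ B2`:
the term of the single new node on a strand of `a`. -/
noncomputable def stepEvent (A : S.Strand → α) (B1 B2 : S.Bundle) (a : α) :
    Option (Bool × M) := by
  classical
  exact if h : ∃ p : (S.Strand ≃ S.Strand) × S.Strand,
      StepVia A p.1 B1 B2 ∧ A p.2 = a ∧
      B2.strandHeight (p.1 p.2) = B1.strandHeight p.2 + 1 then
    S.term (h.choose.1 h.choose.2, B2.strandHeight (h.choose.1 h.choose.2))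
  else none

/-- The history of agent `a` at time `m` along a chain. -/
noncomputable def Chain.hist {A : S.Strand → α} (C : Chain (S := S) A) (a : α) :
    ℕ → List (Bool × M)
  | 0 => []
  | m + 1 => C.hist a m ++ (stepEvent A (C.B m) (C.B (m + 1)) a).toList

end StrandSpace

/-- A run: a local state (history of events) for each agent at each time.
`(true, u)` is `sent(u)` and `(false, u)` is `recv(u)`. -/
def Run (α M : Type) := ℕ → α → List (Bool × M)

variable {M α : Type}

/-- MP1–MP3 with respect to generating history sets `V`. -/
def MP (V : α → Set (List (Bool × M))) (r : Run α M) : Prop :=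
  (∀ a m, r m a ∈ V a) ∧
  (∀ a m u, (false, u) ∈ r m a → ∃ b, (true, u) ∈ r m b) ∧
  (∀ a, r 0 a = []) ∧
  (∀ a m, r (m + 1) a = r m a ∨ ∃ e, r (m + 1) a = r m a ++ [e])

/-- The strand system generated by history sets `V`: all runs satisfying MP1–3. -/
def generated (V : α → Set (List (Bool × M))) : Set (Run α M) := {r | MP V r}

def IsStrandSystem (R : Set (Run α M)) : Prop :=
  ∃ V : α → Set (List (Bool × M)), R = generated V

/-- The run associated with a chain. -/
noncomputable def StrandSpace.Chain.run {S : StrandSpace M} {A : S.Strand → α}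
    (C : StrandSpace.Chain (S := S) A) : Run α M := fun m a => C.hist a m

/-- `R(Σ, A, A)`: the translation of the strand space `S` under agent assignment `A`. -/
def systemOf (S : StrandSpace M) (A : S.Strand → α) : Set (Run α M) :=
  {r | ∃ C : StrandSpace.Chain (S := S) A, C.run = r}

end StrandPaper

open StrandPaper StrandPaper.StrandSpace

/-!
A step `B₁ ↦ B₂` adds at most one node on top of each strand. Call a node of `B₂` *old* if its
preimage under the strand bijection is a node of `B₁`. An edge of `B₂` into an old node comes
from an old node (for `→` because a negative node has a unique incoming edge, which `B₁`
already supplies), so a causal path of `B₂` is a path of old nodes, which maps to a path of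
`B₁`, followed by a path starting at a new node. A new node is the top of its strand, so its only
way out is a `→` edge, and that ends at a negative node; this node has no `→` edge out and, being
new as well, no `⇒` edge out. Hence each step raises the height by at most two.
-/

namespace StrandPaper.StrandSpace

variable {M α : Type} {S : StrandSpace M}

namespace Bundle

variable (B : S.Bundle)

lemma mem_of_mem_of_le {s : S.Strand} {i j : ℕ} (hi : (s, i) ∈ B.nodes) (hj : 1 ≤ j)
    (hji : j ≤ i) : (s, j) ∈ B.nodes := by
  induction i, hji using Nat.le_induction with
  | base => exact hi
  | succ i hji ih =>
    have hvalid := B.nodes_valid _ hi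
    refine ih (B.succ_closed (s, i) (s, i + 1) ⟨rfl, rfl, ⟨by omega, ?_⟩, hvalid⟩ hi)
    exact le_trans (Nat.le_succ i) hvalid.2

lemma bddAbove_strand (s : S.Strand) : BddAbove {i | (s, i) ∈ B.nodes} :=
  ⟨(S.tr s).length, fun _ hi => (B.nodes_valid _ hi).2⟩

lemma mem_nodes_iff {s : S.Strand} {i : ℕ} :
    (s, i) ∈ B.nodes ↔ 1 ≤ i ∧ i ≤ B.strandHeight s := by
  refine ⟨fun hi => ⟨(B.nodes_valid _ hi).1, le_csSup (B.bddAbove_strand s) hi⟩, ?_⟩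
  rintro ⟨hi, his⟩
  have hne : {i | (s, i) ∈ B.nodes}.Nonempty := by
    by_contra hempty
    rw [Set.not_nonempty_iff_eq_empty] at hempty
    simp only [strandHeight, hempty, csSup_empty, Nat.bot_eq_zero] at his
    omega
  exact B.mem_of_mem_of_le (Nat.sSup_mem hne (B.bddAbove_strand s)) hi his

variable {B}

lemma edge.mem_right {m m' : S.Node} (h : B.edge m m') : m' ∈ B.nodes := by
  rcases h with hcomm | ⟨-, -, hm'⟩
  · exact (B.comm_mem _ _ hcomm).2.1
  · exact hm'

lemma CausalPath.infix {l l' : List S.Node} (hl : B.CausalPath l) (h : l' <:+: l) :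
    B.CausalPath l' :=
  ⟨hl.1.infix h, fun n hn => hl.2 n (h.subset hn)⟩

end Bundle

lemma heightLE_emptyBundle (k : ℕ) : (emptyBundle S).HeightLE k := by
  rintro (_ | ⟨n, l⟩) hl
  · simp
  · exact absurd (hl.2 n List.mem_cons_self) (Set.notMem_empty n)

def IsOld (f : S.Strand ≃ S.Strand) (B₁ : S.Bundle) (m : S.Node) : Prop :=
  Prod.map f.symm id m ∈ B₁.nodes

namespace StepVia

variable {A : S.Strand → α} {f : S.Strand ≃ S.Strand} {B₁ B₂ : S.Bundle}

lemma strandHeight_le_succ (h : StepVia A f B₁ B₂) (s : S.Strand) :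
    B₂.strandHeight (f s) ≤ B₁.strandHeight s + 1 := by
  by_cases hs : B₂.strandHeight (f s) = B₁.strandHeight s
  · omega
  · exact (h.2.2 s s rfl hs hs).2.le

lemma comm_pullback (h : StepVia A f B₁ B₂) {x : S.Node} {s : S.Strand} {i : ℕ}
    (hsi : (s, i) ∈ B₁.nodes) (hx : B₂.comm x (f s, i)) :
    B₁.comm (Prod.map f.symm id x) (s, i) := by
  obtain ⟨-, hfsi, u, -, hrecv⟩ := B₂.comm_mem _ _ hx
  have hterm := (h.2.1.1 s i hsi).2
  obtain ⟨⟨t, j⟩, hy, -⟩ := B₁.recv_unique _ hsi u (hterm ▸ hrecv)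
  obtain ⟨_, -, hunique⟩ := B₂.recv_unique _ hfsi u hrecv
  have hxy : x = (f t, j) := (hunique x hx).trans (hunique _ (h.2.1.2 _ _ s i hy)).symm
  simpa [hxy] using hy

lemma isOld_of_succEdge (h : StepVia A f B₁ B₂) {m m' : S.Node} (hsucc : S.SuccEdge m m')
    (hm' : m' ∈ B₂.nodes) : IsOld f B₁ m := by
  obtain ⟨hstrand, hindex, hm, -⟩ := hsucc
  have hle := (B₂.mem_nodes_iff.1 hm').2
  have hstep := h.strandHeight_le_succ (f.symm m.1)
  rw [Equiv.apply_symm_apply] at hstep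
  rw [hstrand] at hle
  show (f.symm m.1, m.2) ∈ B₁.nodes
  exact B₁.mem_nodes_iff.2 ⟨hm.1, by omega⟩

lemma edge_pullback (h : StepVia A f B₁ B₂) {m m' : S.Node} (he : B₂.edge m m')
    (hm' : IsOld f B₁ m') : B₁.edge (Prod.map f.symm id m) (Prod.map f.symm id m') := by
  rcases he with hcomm | ⟨hsucc, -, hm'mem⟩
  · left
    exact h.comm_pullback hm' (by simpa using hcomm)
  · have hm := h.isOld_of_succEdge hsucc hm'mem
    obtain ⟨hstrand, hindex, -, -⟩ := hsucc
    exact Or.inr ⟨⟨by simp [hstrand], hindex, B₁.nodes_valid _ hm, B₁.nodes_valid _ hm'⟩, hm, hm'⟩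

lemma isOld_of_edge (h : StepVia A f B₁ B₂) {m m' : S.Node} (he : B₂.edge m m')
    (hm' : IsOld f B₁ m') : IsOld f B₁ m := by
  rcases h.edge_pullback he hm' with hcomm | ⟨-, hm, -⟩
  · exact (B₁.comm_mem _ _ hcomm).1
  · exact hm

lemma causalPath_map (h : StepVia A f B₁ B₂) {l : List S.Node} (hl : B₂.CausalPath l)
    (hold : ∀ m ∈ l, IsOld f B₁ m) : B₁.CausalPath (l.map (Prod.map f.symm id)) := by
  refine ⟨(List.isChain_map _).2 ?_, ?_⟩
  · exact hl.1.imp_of_mem_imp fun _ _ _ hm' he => h.edge_pullback he (hold _ hm')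
  · intro n hn
    obtain ⟨m, hm, rfl⟩ := List.mem_map.1 hn
    exact hold m hm

lemma length_le_two_of_not_isOld (h : StepVia A f B₁ B₂) {m : S.Node} {l : List S.Node}
    (hl : B₂.CausalPath (m :: l)) (hnew : ¬ IsOld f B₁ m) : (m :: l).length ≤ 2 := by
  rcases l with _ | ⟨m₂, _ | ⟨m₃, l⟩⟩
  · simp
  · simp
  exfalso
  obtain ⟨he₁₂, he₂₃, -⟩ := List.isChain_cons_cons.1 hl.1 |>.imp_right List.isChain_cons_cons.1
  have hm₃ := he₂₃.mem_right
  rcases he₁₂ with hcomm₁₂ | ⟨hsucc₁₂, -, hm₂⟩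
  · rcases he₂₃ with hcomm₂₃ | ⟨hsucc₂₃, -, -⟩
    · obtain ⟨-, -, u, -, hrecv⟩ := B₂.comm_mem _ _ hcomm₁₂
      obtain ⟨-, -, v, hsend, -⟩ := B₂.comm_mem _ _ hcomm₂₃
      simp [hrecv] at hsend
    · exact hnew (h.isOld_of_edge (Or.inl hcomm₁₂) (h.isOld_of_succEdge hsucc₂₃ hm₃))
  · exact hnew (h.isOld_of_succEdge hsucc₁₂ hm₂)

end StepVia

lemma Step.heightLE_add_two {A : S.Strand → α} {B₁ B₂ : S.Bundle} (hstep : Step A B₁ B₂)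
    {k : ℕ} (hk : B₁.HeightLE k) : B₂.HeightLE (k + 2) := by
  classical
  obtain ⟨f, h⟩ := hstep
  intro l hl
  set old : S.Node → Bool := fun m => decide (IsOld f B₁ m)
  have hold : (l.takeWhile old).length ≤ k + 1 := by
    have hpath := h.causalPath_map (hl.infix (List.takeWhile_prefix old).isInfix)
      fun m hm => by simpa [old] using List.mem_takeWhile_imp hm
    simpa using hk _ hpath
  have hnew : (l.dropWhile old).length ≤ 2 := by
    have hpath := hl.infix (List.dropWhile_suffix old).isInfix
    have hhead := List.head?_dropWhile_not old l
    rcases hdrop : l.dropWhile old with _ | ⟨m, l'⟩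
    · simp
    · rw [hdrop] at hpath hhead
      exact h.length_le_two_of_not_isOld hpath (by simpa [old] using hhead)
  rw [← List.takeWhile_append_dropWhile (p := old) (l := l), List.length_append]
  omega

end StrandPaper.StrandSpace

/-- In a chain `B_0 ↦ B_1 ↦ ⋯` starting from the empty bundle, where each
step extends, per agent, at most one strand by at most one node, the height of `B_n`
(the length of the longest causal path along `→` and `⇒` edges) is at most `2n`. -/
theorem chain_height_le_two_n {M α : Type} {S : StrandSpace M} {A : S.Strand → α}
    (C : Chain (S := S) A) (n : ℕ) :
    (C.B n).HeightLE (2 * n) := by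
  induction n with
  | zero => simpa [C.init] using heightLE_emptyBundle 0
  | succ n ih => exact (C.step n).heightLE_add_two ih
end

section
/- If each strand is assigned to a distinct agent, then for every bundle B of finite height there exist bundles B_1, ..., B_k such that B_0 ↦ B_1 ↦ ... ↦ B_k ↦ B, where B_0 is the empty bundle. That is, every finite-height bundle is reachable by a finite chain from the empty bundle. -/
open StrandPaper StrandPaper.StrandSpace

/-!
Cut `B` into layers by causal depth: `B.trunc k` keeps the nodes at which every causal path
ending there has at most `k` nodes. Depth strictly decreases backwards along edges, so each
truncation is again a bundle; `B.trunc 0` is empty and `B.trunc (K + 1) = B` when `B` has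
height `K`. Passing from `B.trunc k` to `B.trunc (k + 1)` adds at most one node per strand,
because the strand predecessor of a node of depth `k + 1` has depth `k`. With every strand its
own agent such a one-node-per-strand extension is a step, so the truncations form a chain.
-/

namespace StrandPaper.StrandSpace

variable {M : Type} {S : StrandSpace M}

lemma succEdge_of_isNode {s : S.Strand} {i : ℕ} (hi : 1 ≤ i) (h : S.IsNode (s, i + 1)) :
    S.SuccEdge (s, i) (s, i + 1) :=
  ⟨rfl, rfl, ⟨hi, by have := h.2; simp only at this ⊢; omega⟩, h⟩

namespace Bundle

lemma ext_of_nodes_comm {B₁ B₂ : S.Bundle} (hn : B₁.nodes = B₂.nodes)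
    (hc : B₁.comm = B₂.comm) : B₁ = B₂ := by
  cases B₁; cases B₂; cases hn; cases hc; rfl

lemma edge_mem {B : S.Bundle} {n₁ n₂ : S.Node} (h : B.edge n₁ n₂) :
    n₁ ∈ B.nodes ∧ n₂ ∈ B.nodes := by
  rcases h with h | ⟨_, h₁, h₂⟩
  · exact ⟨(B.comm_mem _ _ h).1, (B.comm_mem _ _ h).2.1⟩
  · exact ⟨h₁, h₂⟩

lemma CausalPath.concat_edge {B : S.Bundle} {l : List S.Node} {n₁ n₂ : S.Node}
    (hl : B.CausalPath l) (hlast : l.getLast? = some n₁) (he : B.edge n₁ n₂) :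
    B.CausalPath (l ++ [n₂]) := by
  refine ⟨hl.1.append (List.isChain_singleton _) ?_, ?_⟩
  · simp_all
  · intro n hn
    rcases List.mem_append.1 hn with hn | hn
    · exact hl.2 n hn
    · exact List.mem_singleton.1 hn ▸ (edge_mem he).2

-- Depth counts the nodes of a path, not its edges: a node of `B` has depth at least `1`.
def DepthLE (B : S.Bundle) (n : S.Node) (k : ℕ) : Prop :=
  ∀ l, B.CausalPath l → l.getLast? = some n → l.length ≤ k

lemma DepthLE.mono {B : S.Bundle} {n : S.Node} {k k' : ℕ} (h : B.DepthLE n k) (hk : k ≤ k') :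
    B.DepthLE n k' :=
  fun l hl hlast => (h l hl hlast).trans hk

lemma DepthLE.of_edge {B : S.Bundle} {n₁ n₂ : S.Node} {k : ℕ} (he : B.edge n₁ n₂)
    (h : B.DepthLE n₂ (k + 1)) : B.DepthLE n₁ k := by
  intro l hl hlast
  simpa using h _ (hl.concat_edge hlast he) (by simp)

lemma not_depthLE_zero {B : S.Bundle} {n : S.Node} (hn : n ∈ B.nodes) : ¬ B.DepthLE n 0 :=
  fun h => by simpa using h [n] ⟨List.isChain_singleton n, by simpa⟩ rfl

lemma depthLE_of_heightLE {B : S.Bundle} {K : ℕ} (hK : B.HeightLE K) (n : S.Node) :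
    B.DepthLE n (K + 1) :=
  fun l hl _ => hK l hl

def trunc (B : S.Bundle) (k : ℕ) : S.Bundle where
  nodes := {n | n ∈ B.nodes ∧ B.DepthLE n k}
  comm n₁ n₂ :=
    B.comm n₁ n₂ ∧ (n₁ ∈ B.nodes ∧ B.DepthLE n₁ k) ∧ (n₂ ∈ B.nodes ∧ B.DepthLE n₂ k)
  nodes_valid n hn := B.nodes_valid n hn.1
  comm_mem n₁ n₂ h := ⟨h.2.1, h.2.2, (B.comm_mem _ _ h.1).2.2⟩
  recv_unique n₂ hn₂ u hu := by
    obtain ⟨n₁, hc, huniq⟩ := B.recv_unique n₂ hn₂.1 u hu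
    have hn₁ : B.DepthLE n₁ k := (hn₂.2.mono k.le_succ).of_edge (Or.inl hc)
    exact ⟨n₁, ⟨hc, ⟨(B.comm_mem _ _ hc).1, hn₁⟩, hn₂⟩, fun n hn => huniq n hn.1⟩
  succ_closed n₁ n₂ hs hn₂ := by
    have hn₁ := B.succ_closed n₁ n₂ hs hn₂.1
    exact ⟨hn₁, (hn₂.2.mono k.le_succ).of_edge (Or.inr ⟨hs, hn₁, hn₂.1⟩)⟩
  acyclic n h := B.acyclic n <| Relation.TransGen.mono
    (fun _ _ e => e.imp And.left fun ⟨hs, ha, hb⟩ => ⟨hs, ha.1, hb.1⟩) n n h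

lemma trunc_zero (B : S.Bundle) : B.trunc 0 = emptyBundle S := by
  refine ext_of_nodes_comm ?_ ?_
  · ext n
    exact iff_of_false (fun hn => not_depthLE_zero hn.1 hn.2) (Set.notMem_empty n)
  · funext n₁ n₂
    exact propext (iff_of_false (fun h => not_depthLE_zero h.2.1.1 h.2.1.2) id)

lemma trunc_eq_self {B : S.Bundle} {K : ℕ} (hK : B.HeightLE K) : B.trunc (K + 1) = B := by
  refine ext_of_nodes_comm ?_ ?_
  · ext n
    exact ⟨And.left, fun hn => ⟨hn, depthLE_of_heightLE hK n⟩⟩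
  · funext n₁ n₂
    refine propext ⟨And.left, fun hc => ⟨hc, ?_, ?_⟩⟩
    · exact ⟨(B.comm_mem _ _ hc).1, depthLE_of_heightLE hK n₁⟩
    · exact ⟨(B.comm_mem _ _ hc).2.1, depthLE_of_heightLE hK n₂⟩

lemma strand_bddAbove (B : S.Bundle) (s : S.Strand) : BddAbove {i | (s, i) ∈ B.nodes} :=
  ⟨(S.tr s).length, fun _ hi => (B.nodes_valid _ hi).2⟩

lemma le_strandHeight {B : S.Bundle} {s : S.Strand} {i : ℕ} (h : (s, i) ∈ B.nodes) :
    i ≤ B.strandHeight s :=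
  le_csSup (B.strand_bddAbove s) h

lemma strandHeight_mem_or_eq_zero (B : S.Bundle) (s : S.Strand) :
    (s, B.strandHeight s) ∈ B.nodes ∨ B.strandHeight s = 0 := by
  rcases Set.eq_empty_or_nonempty {i | (s, i) ∈ B.nodes} with he | hne
  · exact Or.inr (by rw [strandHeight, he, csSup_empty]; rfl)
  · exact Or.inl (Nat.sSup_mem hne (B.strand_bddAbove s))

lemma strandHeight_mono {B₁ B₂ : S.Bundle} (h : B₁.nodes ⊆ B₂.nodes) (s : S.Strand) :
    B₁.strandHeight s ≤ B₂.strandHeight s := by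
  rcases B₁.strandHeight_mem_or_eq_zero s with hmem | hzero
  · exact le_strandHeight (h hmem)
  · omega

lemma trunc_nodes_subset_succ (B : S.Bundle) (k : ℕ) :
    (B.trunc k).nodes ⊆ (B.trunc (k + 1)).nodes :=
  fun _ hn => ⟨hn.1, hn.2.mono k.le_succ⟩

lemma trunc_comm_le_succ (B : S.Bundle) (k : ℕ) : (B.trunc k).comm ≤ (B.trunc (k + 1)).comm :=
  fun _ _ h => ⟨h.1, B.trunc_nodes_subset_succ k h.2.1, B.trunc_nodes_subset_succ k h.2.2⟩

lemma strandHeight_trunc_succ_le (B : S.Bundle) (s : S.Strand) (k : ℕ) :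
    (B.trunc (k + 1)).strandHeight s ≤ (B.trunc k).strandHeight s + 1 := by
  rcases (B.trunc (k + 1)).strandHeight_mem_or_eq_zero s with hmem | hzero
  · obtain ⟨i, hi⟩ : ∃ i, (B.trunc (k + 1)).strandHeight s = i + 1 :=
      Nat.exists_eq_add_one.2 (B.nodes_valid _ hmem.1).1
    rw [hi] at hmem ⊢
    rcases Nat.eq_zero_or_pos i with rfl | hpos
    · omega
    have hs := succEdge_of_isNode hpos (B.nodes_valid _ hmem.1)
    have hpred := B.succ_closed _ _ hs hmem.1
    have hdepth := hmem.2.of_edge (Or.inr ⟨hs, hpred, hmem.1⟩)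
    exact Nat.succ_le_succ (le_strandHeight (B := B.trunc k) ⟨hpred, hdepth⟩)
  · omega

end Bundle

lemma step_id_of_strandHeight_le_succ {B₁ B₂ : S.Bundle} (hn : B₁.nodes ⊆ B₂.nodes)
    (hc : B₁.comm ≤ B₂.comm) (hh : ∀ s, B₂.strandHeight s ≤ B₁.strandHeight s + 1) :
    Step id B₁ B₂ := by
  refine ⟨Equiv.refl _, fun _ => rfl, ⟨fun _ _ h => ⟨hn h, rfl⟩, fun _ _ _ _ h => hc _ _ h⟩,
    ?_⟩
  rintro s s' (rfl : s = s') hne -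
  have hge := Bundle.strandHeight_mono hn s
  have hle := hh s
  exact ⟨rfl, by simp only [Equiv.refl_apply] at hne ⊢; omega⟩

lemma Bundle.step_trunc (B : S.Bundle) (k : ℕ) : Step id (B.trunc k) (B.trunc (k + 1)) :=
  step_id_of_strandHeight_le_succ (B.trunc_nodes_subset_succ k) (B.trunc_comm_le_succ k)
    fun s => B.strandHeight_trunc_succ_le s k

def Bundle.truncChain (B : S.Bundle) : Chain (S := S) id :=
  ⟨B.trunc, B.trunc_zero, B.step_trunc⟩

end StrandPaper.StrandSpace

/-- With each strand its own agent (identity agent assignment), every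
bundle of finite height is reachable by a finite chain from the empty bundle: there
are bundles `B_1, …, B_k` with `B_0 ↦ B_1 ↦ ⋯ ↦ B_k ↦ B` (equivalently, `B` occurs
in some chain). -/
theorem finite_height_bundle_reachable {M : Type} (S : StrandSpace M) (B : S.Bundle)
    (h : B.FiniteHeight) :
    ∃ (C : Chain (S := S) (id : S.Strand → S.Strand)) (m : ℕ), C.B m = B := by
  obtain ⟨K, hK⟩ := h
  exact ⟨B.truncChain, K + 1, Bundle.trunc_eq_self hK⟩
end

section
/- There is no agent assignment A and A-history-preserving translation T from strand spaces to strand systems such that the strand system R_1 is in the image of T, where R_1 is the strand system over agents {1,2,3} generated by the history sets V_1 = {⟨⟩, ⟨recv(u)⟩, ⟨recv(u),sent(v)⟩}, V_2 = {⟨⟩, ⟨sent(u)⟩, ⟨sent(x)⟩, ⟨sent(u),recv(v)⟩, ⟨sent(x),recv(y)⟩}, V_3 = {⟨⟩, ⟨recv(x)⟩, ⟨recv(x),sent(y)⟩}, with x, y, u, v distinct messages. -/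
open StrandPaper StrandPaper.StrandSpace

/-- The set of events appearing at nodes of `B` lying on strands assigned to agent `a`. -/
def agentEvents {M α : Type} {S : StrandSpace M} (A : S.Strand → α) (B : S.Bundle)
    (a : α) : Set (Bool × M) :=
  {e | ∃ s i, A s = a ∧ (s, i) ∈ B.nodes ∧ S.term (s, i) = some e}

/-- An `A`-history preserving translation of `S` yields `R`: (i) every agent history of
every run of `R` corresponds to the agent's events in some bundle of `S`; (ii) every
finite-height bundle's agent events arise as some agent history in some run of `R`. -/
def HistPreserving {M α : Type} (S : StrandSpace M) (A : S.Strand → α)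
    (R : Set (Run α M)) : Prop :=
  (∀ a : α, ∀ r ∈ R, ∀ m : ℕ, ∃ B : S.Bundle,
      {e | e ∈ r m a} = agentEvents A B a) ∧
  (∀ a : α, ∀ B : S.Bundle, B.FiniteHeight →
      ∃ r ∈ R, ∃ m : ℕ, {e | e ∈ r m a} = agentEvents A B a)

/-- The generating history sets of the system `R_1`: agents `0, 1, 2` play the roles of
agents `1, 2, 3` of the paper. -/
def V1 {M : Type} (u v x y : M) : Fin 3 → Set (List (Bool × M))
  | 0 => {[], [(false, u)], [(false, u), (true, v)]}
  | 1 => {[], [(true, u)], [(true, x)], [(true, u), (false, v)], [(true, x), (false, y)]}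
  | 2 => {[], [(false, x)], [(false, x), (true, y)]}

/-!
Agent 2 can start either by sending `u` or by sending `x`. By (i), each of the two one-event
histories `⟨sent(u)⟩`, `⟨sent(x)⟩` is the set of agent-2 events of some bundle; by ⇒-closure
that bundle contains the first node of a strand of agent 2, which must then be `+u`
(resp. `+x`). The two first nodes together form a bundle of height 0 with no edges at all, so
by (ii) some history in `V_2` contains both `sent(u)` and `sent(x)`, which none does.
-/

namespace StrandPaper

namespace StrandSpace

variable {M α : Type} {S : StrandSpace M}

lemma SuccEdge.two_le_snd {n₁ n₂ : S.Node} (h : S.SuccEdge n₁ n₂) : 2 ≤ n₂.2 := by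
  obtain ⟨-, hsucc, ⟨hpos, -⟩, -⟩ := h
  omega

lemma exists_term_eq_some_of_isNode {n : S.Node} (h : S.IsNode n) : ∃ e, S.term n = some e :=
  ⟨(S.tr n.1)[n.2 - 1]'(by have := h.1; have := h.2; omega), List.getElem?_eq_getElem _⟩

lemma isNode_one_of_term_eq_some {s : S.Strand} {e : Bool × M} (h : S.term (s, 1) = some e) :
    S.IsNode (s, 1) :=
  ⟨le_rfl, (List.getElem?_eq_some_iff.mp h).1⟩

lemma Bundle.mem_nodes_one (B : S.Bundle) {s : S.Strand} :
    ∀ {i : ℕ}, (s, i) ∈ B.nodes → (s, 1) ∈ B.nodes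
  | 0, h => absurd (B.nodes_valid _ h).1 (by simp)
  | 1, h => h
  | i + 2, h =>
    have hvalid := B.nodes_valid _ h
    B.mem_nodes_one (B.succ_closed (s, i + 1) (s, i + 2)
      ⟨rfl, rfl, ⟨by omega, Nat.le_of_succ_le hvalid.2⟩, hvalid⟩ h)

lemma Bundle.heightLE_zero_of_forall_not_edge (B : S.Bundle) (h : ∀ n₁ n₂, ¬ B.edge n₁ n₂) :
    B.HeightLE 0
  | [], _ | [_], _ => by simp
  | _ :: _ :: _, hpath => absurd (List.isChain_cons_cons.mp hpath.1).1 (h _ _)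

def firstSendsBundle (T : Set S.Strand) (hT : ∀ s ∈ T, ∃ w, S.term (s, 1) = some (true, w)) :
    S.Bundle where
  nodes := {n | n.1 ∈ T ∧ n.2 = 1}
  comm _ _ := False
  nodes_valid := by
    rintro ⟨s, _⟩ ⟨hs, rfl⟩
    exact isNode_one_of_term_eq_some (hT s hs).choose_spec
  comm_mem _ _ h := h.elim
  recv_unique := by
    rintro ⟨s, _⟩ ⟨hs, rfl⟩ w hw
    obtain ⟨w', hw'⟩ := hT s hs
    simp [hw'] at hw
  succ_closed n₁ n₂ hsucc hn₂ := absurd hn₂.2 (by have := hsucc.two_le_snd; omega)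
  acyclic n hcycle := by
    obtain ⟨_, hedge | ⟨hsucc, -, hmem⟩, -⟩ := Relation.TransGen.head'_iff.mp hcycle
    · exact hedge
    · exact absurd hmem.2 (by have := hsucc.two_le_snd; omega)

lemma firstSendsBundle_finiteHeight (T : Set S.Strand)
    (hT : ∀ s ∈ T, ∃ w, S.term (s, 1) = some (true, w)) :
    (firstSendsBundle T hT).FiniteHeight := by
  refine ⟨0, Bundle.heightLE_zero_of_forall_not_edge _ ?_⟩
  rintro n₁ n₂ (hcomm | ⟨hsucc, -, hmem⟩)
  · exact hcomm
  · exact absurd hmem.2 (by have := hsucc.two_le_snd; omega)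

end StrandSpace

variable {M α : Type}

def singleSendRun [DecidableEq α] (b : α) (w : M) : Run α M :=
  fun m a => if m ≠ 0 ∧ a = b then [(true, w)] else []

lemma singleSendRun_mem_generated [DecidableEq α] {V : α → Set (List (Bool × M))} {b : α}
    {w : M} (hnil : ∀ a, [] ∈ V a) (hw : [(true, w)] ∈ V b) :
    singleSendRun b w ∈ generated V := by
  refine ⟨fun a m => ?_, fun a m w' hw' => ?_, fun a => ?_, fun a m => ?_⟩
  · unfold singleSendRun
    split_ifs with h
    · exact h.2 ▸ hw
    · exact hnil a
  · unfold singleSendRun at hw'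
    split_ifs at hw' <;> simp at hw'
  · simp [singleSendRun]
  · by_cases h : m = 0 ∧ a = b
    · obtain ⟨rfl, rfl⟩ := h
      exact Or.inr ⟨(true, w), by simp [singleSendRun]⟩
    · left
      unfold singleSendRun
      grind

end StrandPaper

lemma exists_first_node_of_agentEvents_eq_singleton {M α : Type} {S : StrandSpace M}
    {A : S.Strand → α} {B : S.Bundle} {a : α} {e : Bool × M}
    (h : agentEvents A B a = {e}) : ∃ s, A s = a ∧ S.term (s, 1) = some e := by
  obtain ⟨s, i, hs, hnode, -⟩ : e ∈ agentEvents A B a := h ▸ rfl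
  have hfirst := B.mem_nodes_one hnode
  obtain ⟨e', he'⟩ := exists_term_eq_some_of_isNode (B.nodes_valid _ hfirst)
  have : e' ∈ agentEvents A B a := ⟨s, 1, hs, hfirst, he'⟩
  rw [h, Set.mem_singleton_iff] at this
  exact ⟨s, hs, this ▸ he'⟩

lemma HistPreserving.exists_first_node {M α : Type} {S : StrandSpace M} {A : S.Strand → α}
    {R : Set (Run α M)} (hP : HistPreserving S A R) {r : Run α M} (hr : r ∈ R) {m : ℕ}
    {a : α} {e : Bool × M} (hrm : r m a = [e]) : ∃ s, A s = a ∧ S.term (s, 1) = some e := by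
  obtain ⟨B, hB⟩ := hP.1 a r hr m
  refine exists_first_node_of_agentEvents_eq_singleton (B := B) ?_
  rw [← hB, hrm]
  simp

lemma V1_nil_mem {M : Type} (u v x y : M) (a : Fin 3) : [] ∈ V1 u v x y a := by
  fin_cases a <;> simp [V1]

lemma V1_one_not_sent_both {M : Type} {u v x y : M} (hux : u ≠ x) {h : List (Bool × M)}
    (hh : h ∈ V1 u v x y 1) (hu : (true, u) ∈ h) (hx : (true, x) ∈ h) : False := by
  simp only [V1, Set.mem_insert_iff, Set.mem_singleton_iff] at hh
  rcases hh with rfl | rfl | rfl | rfl | rfl <;> simp_all [eq_comm]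

theorem R1_not_in_image_general {M : Type} (u v x y : M)
    (hux : u ≠ x) :
    ¬ ∃ (S : StrandSpace M) (A : S.Strand → Fin 3),
        HistPreserving S A (generated (V1 u v x y)) := by
  rintro ⟨S, A, hP⟩
  have first_send (w : M) (hw : [(true, w)] ∈ V1 u v x y 1) :
      ∃ s, A s = 1 ∧ S.term (s, 1) = some (true, w) :=
    hP.exists_first_node (m := 1) (singleSendRun_mem_generated (V1_nil_mem u v x y) hw)
      (by simp [singleSendRun])
  obtain ⟨su, hsu, htu⟩ := first_send u (by simp [V1])
  obtain ⟨sx, hsx, htx⟩ := first_send x (by simp [V1])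
  have hT : ∀ s ∈ ({su, sx} : Set S.Strand), ∃ w, S.term (s, 1) = some (true, w) := by
    rintro s (rfl | rfl)
    exacts [⟨u, htu⟩, ⟨x, htx⟩]
  obtain ⟨r, hr, m, hrm⟩ := hP.2 1 _ (firstSendsBundle_finiteHeight _ hT)
  have sent_mem {s : S.Strand} (hs : s ∈ ({su, sx} : Set S.Strand)) (hA : A s = 1) {w : M}
      (ht : S.term (s, 1) = some (true, w)) : (true, w) ∈ r m 1 :=
    (Set.ext_iff.mp hrm _).mpr ⟨s, 1, hA, ⟨hs, rfl⟩, ht⟩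
  exact V1_one_not_sent_both hux (hr.1 1 m)
    (sent_mem (by simp) hsu htu) (sent_mem (by simp) hsx htx)

/-- There is no agent assignment `A` and `A`-history preserving translation
`T` from strand spaces to strand systems such that `R_1` (the system generated by
`V1`) is in the image of `T`. -/
theorem R1_not_in_image {M : Type} (u v x y : M)
    (huv : u ≠ v) (hux : u ≠ x) (huy : u ≠ y) (hvx : v ≠ x) (hvy : v ≠ y) (hxy : x ≠ y) :
    ¬ ∃ (S : StrandSpace M) (A : S.Strand → Fin 3),
        HistPreserving S A (generated (V1 u v x y)) :=
  R1_not_in_image_general u v x y hux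
end

section
/- The set of runs R(P, τ_P, I_0) generated by a joint protocol P with the strand transition function τ_P from the initial global state where every agent has empty history is a strand system; specifically, a run r is consistent with P given τ_P with r(0) empty if and only if r satisfies MP1 (with V_a the set of a's local states arising in R(P,τ_P,I_0)), MP2, and MP3. -/
open StrandPaper

/-- An action is `send u` (`some u`) or `no-op` (`none`). -/
abbrev ProtoAction (M : Type) := Option M

/-- The strand transition function `τ_P`: given a joint action, each agent's history
either stays put, or appends `sent(u)` provided its action is `send u`, or appends
`recv(u)` provided `sent(u)` appears in some agent's new history. -/
def TauStep {M α : Type} (act : α → ProtoAction M) (σ σ' : α → List (Bool × M)) : Prop :=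
  ∀ a, σ' a = σ a ∨
    (∃ u, act a = some u ∧ σ' a = σ a ++ [(true, u)]) ∨
    (∃ u, σ' a = σ a ++ [(false, u)] ∧ ∃ b, (true, u) ∈ σ' b)

/-- A run is consistent with the joint protocol `P` given `τ_P`: every round is the
result of a joint action allowed by `P` at the current global state. -/
def Consistent {M α : Type} (P : α → List (Bool × M) → Set (ProtoAction M))
    (r : Run α M) : Prop :=
  ∀ m : ℕ, ∃ act : α → ProtoAction M,
    (∀ a, act a ∈ P a (r m a)) ∧ TauStep act (r m) (r (m + 1))

/-- `R(P, τ_P, I_0)`: all runs consistent with `P` given `τ_P` starting from the global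
state where every agent has the empty history. -/
def protoSystem {M α : Type} (P : α → List (Bool × M) → Set (ProtoAction M)) :
    Set (Run α M) :=
  {r | Consistent P r ∧ ∀ a, r 0 a = []}

/-!
Along a run of `τ_P` each local history grows by at most one event per round, and `recv(u)` is
appended only when `sent(u)` is already visible, so the runs of `R(P, τ_P, I_0)` satisfy MP1–3.
Conversely, in a run satisfying MP1–3 the only round that constrains the joint action is one in
which an agent with history `σ` appends `sent(u)`. By MP1, `σ·sent(u)` is a prefix of a local
state reached in some run of `R(P, τ_P, I_0)`; that run went from `σ` to `σ·sent(u)` in one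
round, so `send(u) ∈ P_a(σ)`. Every other agent picks any action of its nonempty `P_a`.
-/

section GrowingHistories

variable {β : Type*} {h : ℕ → List β}

theorem isPrefix_of_le (hstep : ∀ m, h (m + 1) = h m ∨ ∃ e, h (m + 1) = h m ++ [e])
    {m n : ℕ} (hmn : m ≤ n) : h m <+: h n := by
  induction n, hmn using Nat.le_induction with
  | base => exact List.prefix_rfl
  | succ n _ ih =>
    rcases hstep n with hn | ⟨e, hn⟩
    · rwa [hn]
    · exact hn ▸ ih.trans (List.prefix_append _ _)

theorem exists_step_of_append_singleton_prefix (h0 : h 0 = [])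
    (hstep : ∀ m, h (m + 1) = h m ∨ ∃ e, h (m + 1) = h m ++ [e])
    {m : ℕ} {σ : List β} {e : β} (hp : σ ++ [e] <+: h m) :
    ∃ k, h k = σ ∧ h (k + 1) = σ ++ [e] := by
  induction m with
  | zero => simp [h0] at hp
  | succ m ih =>
    rcases hstep m with hm | ⟨e', hm⟩
    · exact ih (hm ▸ hp)
    · rw [hm, List.prefix_concat_iff] at hp
      rcases hp with hp | hp
      · obtain ⟨rfl, rfl⟩ := List.append_singleton_inj.mp hp
        exact ⟨m, rfl, hm⟩
      · exact ih hp

end GrowingHistories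

section ProtoSystem

variable {M α : Type} {P : α → List (Bool × M) → Set (ProtoAction M)} {r : Run α M}

theorem eq_or_eq_append_singleton_of_mem_protoSystem (hr : r ∈ protoSystem P) (a : α)
    (m : ℕ) : r (m + 1) a = r m a ∨ ∃ e, r (m + 1) a = r m a ++ [e] := by
  obtain ⟨act, -, hτ⟩ := hr.1 m
  rcases hτ a with h | ⟨u, -, h⟩ | ⟨u, h, -⟩
  · exact .inl h
  · exact .inr ⟨_, h⟩
  · exact .inr ⟨_, h⟩

theorem exists_sent_of_recv_mem (hr : r ∈ protoSystem P) {a : α} {m : ℕ} {u : M}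
    (h : (false, u) ∈ r m a) : ∃ b, (true, u) ∈ r m b := by
  induction m generalizing a with
  | zero => simp [hr.2 a] at h
  | succ m ih =>
    have grow : ∀ b, r m b <+: r (m + 1) b := fun b =>
      isPrefix_of_le (h := (r · b)) (eq_or_eq_append_singleton_of_mem_protoSystem hr b) m.le_succ
    have from_old : (false, u) ∈ r m a → ∃ b, (true, u) ∈ r (m + 1) b := fun h =>
      let ⟨b, hb⟩ := ih h
      ⟨b, (grow b).subset hb⟩
    obtain ⟨act, -, hτ⟩ := hr.1 m
    rcases hτ a with ha | ⟨v, -, ha⟩ | ⟨v, ha, hsent⟩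
    · exact from_old (ha ▸ h)
    · exact from_old (by simpa [ha] using h)
    · simp only [ha, List.mem_append, List.mem_singleton, Prod.mk.injEq, true_and] at h
      rcases h with h | rfl
      · exact from_old h
      · exact hsent

theorem mp_of_mem_protoSystem (hr : r ∈ protoSystem P) :
    MP (fun a => {h | ∃ r' ∈ protoSystem P, ∃ m : ℕ, r' m a = h}) r :=
  ⟨fun _ m => ⟨r, hr, m, rfl⟩, fun _ _ _ h => exists_sent_of_recv_mem hr h, hr.2,
    fun a m => eq_or_eq_append_singleton_of_mem_protoSystem hr a m⟩

theorem some_mem_of_eq_append_sent (hr : r ∈ protoSystem P) {a : α} {k : ℕ} {u : M}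
    (hk : r (k + 1) a = r k a ++ [(true, u)]) : some u ∈ P a (r k a) := by
  obtain ⟨act, hact, hτ⟩ := hr.1 k
  rcases hτ a with h | ⟨v, hv, h⟩ | ⟨v, h, -⟩
  · simp [hk] at h
  · obtain rfl : u = v := by simpa [hk] using h
    exact hv ▸ hact a
  · simp [hk] at h

theorem some_mem_of_append_sent_prefix (hr : r ∈ protoSystem P) {a : α} {m : ℕ}
    {σ : List (Bool × M)} {u : M} (hp : σ ++ [(true, u)] <+: r m a) : some u ∈ P a σ := by
  obtain ⟨k, rfl, hk⟩ := exists_step_of_append_singleton_prefix (h := (r · a)) (hr.2 a)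
    (eq_or_eq_append_singleton_of_mem_protoSystem hr a) hp
  exact some_mem_of_eq_append_sent hr hk

theorem mem_protoSystem_of_mp (hne : ∀ a σ, (P a σ).Nonempty)
    (hmp : MP (fun a => {h | ∃ r' ∈ protoSystem P, ∃ m : ℕ, r' m a = h}) r) :
    r ∈ protoSystem P := by
  obtain ⟨hreach, hrecv, h0, hstep⟩ := hmp
  refine ⟨fun m => ?_, h0⟩
  have allowed : ∀ a, ∃ x ∈ P a (r m a),
      ∀ u, r (m + 1) a = r m a ++ [(true, u)] → x = some u := by
    intro a
    by_cases hsend : ∃ u, r (m + 1) a = r m a ++ [(true, u)]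
    · obtain ⟨u, hu⟩ := hsend
      obtain ⟨r', hr', m', hm'⟩ := hreach a (m + 1)
      refine ⟨some u, some_mem_of_append_sent_prefix hr' (m := m') ?_, fun v hv => ?_⟩
      · rw [hm', hu]
      · simpa using hu.symm.trans hv
    · obtain ⟨x, hx⟩ := hne a (r m a)
      exact ⟨x, hx, fun u hu => absurd ⟨u, hu⟩ hsend⟩
  choose act hact hsent using allowed
  refine ⟨act, hact, fun a => ?_⟩
  rcases hstep a m with ha | ⟨⟨_ | _, u⟩, ha⟩
  · exact .inl ha
  · exact .inr (.inr ⟨u, ha, hrecv a (m + 1) u (ha ▸ List.mem_append_right _ (by simp))⟩)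
  · exact .inr (.inl ⟨u, hsent a u ha, ha⟩)

end ProtoSystem

/-- `R(P, τ_P, I_0)` is a strand system; specifically, a run `r` is
consistent with `P` given `τ_P` with empty initial state iff `r` satisfies MP1 (with
`V_a` the local states of `a` arising in `R(P, τ_P, I_0)`), MP2 and MP3. -/
theorem protoSystem_is_strand_system {M α : Type}
    (P : α → List (Bool × M) → Set (ProtoAction M))
    (hne : ∀ a σ, (P a σ).Nonempty) :
    IsStrandSystem (protoSystem P) ∧
    ∀ r : Run α M, r ∈ protoSystem P ↔
      MP (fun a => {h | ∃ r' ∈ protoSystem P, ∃ m : ℕ, r' m a = h}) r := by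
  have key : ∀ r : Run α M, r ∈ protoSystem P ↔
      MP (fun a => {h | ∃ r' ∈ protoSystem P, ∃ m : ℕ, r' m a = h}) r :=
    fun _ => ⟨mp_of_mem_protoSystem, mem_protoSystem_of_mp hne⟩
  exact ⟨⟨_, Set.ext key⟩, key⟩
end

section
/- Consider the strand space Σ = {s_i : i ∈ ℤ} with tr(s_i) = ⟨-u_i, +u_{i+1}⟩ for distinct messages u_i. The entire graph (all nodes with edges ⟨s_i,2⟩ → ⟨s_{i+1},1⟩ and ⟨s_i,1⟩ ⇒ ⟨s_i,2⟩) satisfies conditions B2–B4 (every receive has a unique sender, ⇒-closure, acyclicity) and hence is an infinite bundle, and it has infinite height: for every k there is a causal path of length at least k. -/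
open StrandPaper StrandPaper.StrandSpace

/-- The strand space `Σ = {s_i : i ∈ ℤ}` with `tr(s_i) = ⟨-u_i, +u_{i+1}⟩`. -/
def zSpace {M : Type} (u : ℤ → M) : StrandSpace M where
  Strand := ℤ
  tr := fun i => [(false, u i), (true, u (i + 1))]

/-! The node `⟨s_i, k⟩` has potential `2 i + k`, which every edge of the graph raises by one, so
the graph is acyclic; and `⟨s_0,1⟩ ⇒ ⟨s_0,2⟩ → ⟨s_1,1⟩ ⇒ ⟨s_1,2⟩ → ⋯` is an unbounded causal
path. -/

theorem Relation.TransGen.lt_of_forall_lt {α β : Type*} [Preorder β] {r : α → α → Prop}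
    {f : α → β} (hf : ∀ a b, r a b → f a < f b) {a b : α} (h : Relation.TransGen r a b) :
    f a < f b := by
  simpa [Relation.transGen_eq_self] using h.lift f hf

namespace StrandPaper.StrandSpace.Bundle

variable {M : Type} {S : StrandSpace M} (B : S.Bundle)

theorem left_mem_of_edge {n₁ n₂ : S.Node} (h : B.edge n₁ n₂) : n₁ ∈ B.nodes :=
  h.elim (fun hc => (B.comm_mem _ _ hc).1) (fun hs => hs.2.1)

theorem causalPath_map_range {g : ℕ → S.Node} (hg : ∀ m, B.edge (g m) (g (m + 1))) (k : ℕ) :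
    B.CausalPath ((List.range k).map g) := by
  refine ⟨(List.isChain_map g).2 ((List.isChain_range _ _).2 fun m _ => hg m), ?_⟩
  simp only [List.mem_map]
  rintro _ ⟨m, -, rfl⟩
  exact B.left_mem_of_edge (hg m)

theorem not_heightLE_of_forall_edge {g : ℕ → S.Node} (hg : ∀ m, B.edge (g m) (g (m + 1)))
    (k : ℕ) : ¬ B.HeightLE k := fun hk => by
  simpa using hk _ (B.causalPath_map_range hg (k + 2))

end StrandPaper.StrandSpace.Bundle

namespace zSpace

variable {M : Type} (u : ℤ → M)

theorem isNode_iff (n : ℤ × ℕ) : (zSpace u).IsNode n ↔ 1 ≤ n.2 ∧ n.2 ≤ 2 := by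
  simp [StrandSpace.IsNode, zSpace]

theorem term_one (i : ℤ) : (zSpace u).term (i, 1) = some (false, u i) := by
  simp [StrandSpace.term, zSpace]

theorem term_two (i : ℤ) : (zSpace u).term (i, 2) = some (true, u (i + 1)) := by
  simp [StrandSpace.term, zSpace]

/-- By truncated subtraction, `term (i, 0) = term (i, 1)`. -/
theorem snd_eq_one_of_term_eq_recv {n : ℤ × ℕ} {v : M} (hn : (zSpace u).IsNode n)
    (hv : (zSpace u).term n = some (false, v)) : n.2 = 1 := by
  obtain ⟨i, k⟩ := n
  obtain ⟨hk₁, hk₂⟩ := (isNode_iff u _).1 hn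
  interval_cases k
  · rfl
  · have h := (term_two u i).symm.trans hv
    simp at h

def comm (n₁ n₂ : ℤ × ℕ) : Prop :=
  (zSpace u).IsNode n₁ ∧ (zSpace u).IsNode n₂ ∧ n₁.2 = 2 ∧ n₂.2 = 1 ∧ n₂.1 = n₁.1 + 1

theorem comm_iff_eq {n : ℤ × ℕ} {j : ℤ} (hj : (zSpace u).IsNode (j, 1)) :
    comm u n (j, 1) ↔ n = (j - 1, 2) := by
  constructor
  · rintro ⟨-, -, h₂, -, h₁⟩
    ext
    · exact eq_sub_of_add_eq h₁.symm
    · exact h₂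
  · rintro rfl
    exact ⟨(isNode_iff u _).2 (by omega), hj, rfl, rfl, (sub_add_cancel j 1).symm⟩

theorem existsUnique_comm {n : ℤ × ℕ} {v : M} (hn : (zSpace u).IsNode n)
    (hv : (zSpace u).term n = some (false, v)) : ∃! n₁, comm u n₁ n := by
  obtain ⟨j, l⟩ := n
  obtain rfl : l = 1 := snd_eq_one_of_term_eq_recv u hn hv
  exact ⟨(j - 1, 2), (comm_iff_eq u hn).2 rfl, fun _ h => (comm_iff_eq u hn).1 h⟩

theorem sendsTo_of_comm {n₁ n₂ : ℤ × ℕ} (h : comm u n₁ n₂) : (zSpace u).SendsTo n₁ n₂ := by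
  obtain ⟨i, k⟩ := n₁
  obtain ⟨j, l⟩ := n₂
  obtain ⟨-, -, rfl, rfl, hj⟩ := h
  dsimp only at hj
  exact ⟨u (i + 1), term_two u i, hj ▸ term_one u j⟩

def potential (n : ℤ × ℕ) : ℤ := 2 * n.1 + n.2

theorem potential_lt_of_comm {n₁ n₂ : ℤ × ℕ} (h : comm u n₁ n₂) :
    potential n₁ < potential n₂ := by
  obtain ⟨-, -, h₁, h₂, h₃⟩ := h
  simp only [potential, h₁, h₂, h₃]
  omega

theorem potential_lt_of_succEdge {n₁ n₂ : ℤ × ℕ} (h : (zSpace u).SuccEdge n₁ n₂) :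
    potential n₁ < potential n₂ := by
  obtain ⟨h₁, h₂, -, -⟩ := h
  simp only [potential, h₁, h₂]
  omega

def bundle : (zSpace u).Bundle where
  nodes := {n | (zSpace u).IsNode n}
  comm := comm u
  nodes_valid _ hn := hn
  comm_mem _ _ h := ⟨h.1, h.2.1, sendsTo_of_comm u h⟩
  recv_unique _ hn _ hv := existsUnique_comm u hn hv
  succ_closed _ _ h _ := h.2.2.1
  acyclic _ h := (h.lt_of_forall_lt (f := potential) fun _ _ hr =>
    hr.elim (potential_lt_of_comm u) fun hs => potential_lt_of_succEdge u hs.1).false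

theorem bundle_edge_succ (i : ℤ) : (bundle u).edge (i, 1) (i, 2) := by
  have h₁ : (zSpace u).IsNode (i, 1) := (isNode_iff u _).2 (by omega)
  have h₂ : (zSpace u).IsNode (i, 2) := (isNode_iff u _).2 (by omega)
  exact Or.inr ⟨⟨rfl, rfl, h₁, h₂⟩, h₁, h₂⟩

theorem bundle_edge_comm (i : ℤ) : (bundle u).edge (i, 2) (i + 1, 1) :=
  Or.inl ⟨(isNode_iff u _).2 (by omega), (isNode_iff u _).2 (by omega), rfl, rfl, rfl⟩

def pathNode (m : ℕ) : ℤ × ℕ := ((m / 2 : ℕ), m % 2 + 1)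

theorem pathNode_two_mul (t : ℕ) : pathNode (2 * t) = ((t : ℤ), 1) := by
  simp [pathNode]

theorem pathNode_two_mul_add_one (t : ℕ) : pathNode (2 * t + 1) = ((t : ℤ), 2) := by
  simp only [pathNode, Prod.mk.injEq]
  omega

theorem bundle_edge_pathNode (m : ℕ) : (bundle u).edge (pathNode m) (pathNode (m + 1)) := by
  obtain ⟨t, rfl | rfl⟩ := Nat.even_or_odd' m
  · rw [pathNode_two_mul_add_one, pathNode_two_mul]
    exact bundle_edge_succ u t
  · rw [pathNode_two_mul_add_one, show 2 * t + 1 + 1 = 2 * (t + 1) by ring, pathNode_two_mul]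
    exact_mod_cast bundle_edge_comm u t

end zSpace

theorem infinite_bundle_of_infinite_height_general {M : Type} (u : ℤ → M) :
    ∃ B : (zSpace u).Bundle,
      B.nodes = {n | (zSpace u).IsNode n} ∧
      (∀ (i j : ℤ) (k l : ℕ), B.comm (i, k) (j, l) ↔
        ((zSpace u).IsNode (i, k) ∧ (zSpace u).IsNode (j, l) ∧
          k = 2 ∧ l = 1 ∧ j = i + 1)) ∧
      ∀ k : ℕ, ¬ B.HeightLE k :=
  ⟨zSpace.bundle u, rfl, fun _ _ _ _ => Iff.rfl,
    (zSpace.bundle u).not_heightLE_of_forall_edge (zSpace.bundle_edge_pathNode u)⟩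

/-- For distinct messages `u_i`, the entire graph of `zSpace u` (all
nodes, with `→` edges `⟨s_i,2⟩ → ⟨s_{i+1},1⟩` and the `⇒` edges of each strand)
satisfies B2–B4 and hence is an infinite bundle, and it has infinite height: for every
`k`, it is not of height at most `k` (there is a causal path of length exceeding `k`). -/
theorem infinite_bundle_of_infinite_height {M : Type} (u : ℤ → M)
    (hu : Function.Injective u) :
    ∃ B : (zSpace u).Bundle,
      B.nodes = {n | (zSpace u).IsNode n} ∧
      (∀ (i j : ℤ) (k l : ℕ), B.comm (i, k) (j, l) ↔
        ((zSpace u).IsNode (i, k) ∧ (zSpace u).IsNode (j, l) ∧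
          k = 2 ∧ l = 1 ∧ j = i + 1)) ∧
      ∀ k : ℕ, ¬ B.HeightLE k :=
  infinite_bundle_of_infinite_height_general u
end
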